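/- Let n ≥ 1 be an integer, let p_max ∈ (0,1) and ε′ > 0 satisfy p_max + ε′ < 1, and set the acceptance threshold τ := ⌈n·(p_max + ε′)⌉. Let (Ω, 𝓕, μ) be a probability space with filtration 𝓕₀ ⊆ … ⊆ 𝓕ₙ and let I₁, …, Iₙ be {0,1}-valued random variables, each Iᵢ being 𝓕ᵢ-measurable, with E[Iᵢ ∣ 𝓕_{i-1}] ≤ p_max almost surely for all i. Let S = Σ_{i=1}^n Iᵢ. Then n·p_max < τ ≤ n and μ(S ≥ τ) ≤ exp(−n · D(τ/n ‖ p_max)). -/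

import Mathlib

/-!
Chernoff's method for a sum of adapted indicators. Since `exp (t * I) = 1 + (exp t - 1) * I` for
`I ∈ {0, 1}`, conditioning on `𝓕 (i - 1)` shows that each round multiplies `E[exp (t * S)]` by at
most the Bernoulli(`p`) moment generating function `1 + p * (exp t - 1)`. Markov's inequality then
gives `μ(S ≥ τ) ≤ (exp (-t * a) * (1 + p * (exp t - 1))) ^ n` with `a = τ / n`, for every `t ≥ 0`.
Taking `exp t = a (1 - p) / ((1 - a) p)` when `a < 1`, and letting `t → ∞` when `a = 1`, turns the
bracket into `exp (-D(a ‖ p))`.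
-/

open MeasureTheory Real

/-- Binary relative entropy `D(u ‖ v)` (the `0 · ln 0 = 0` convention is automatic). -/
noncomputable def klBin (u v : ℝ) : ℝ :=
  u * Real.log (u / v) + (1 - u) * Real.log ((1 - u) / (1 - v))

open ProbabilityTheory Filter Topology Finset

noncomputable def chernoffFactor (p a t : ℝ) : ℝ :=
  exp (-(t * a)) * (1 + p * (exp t - 1))

lemma klBin_one_left (p : ℝ) : klBin 1 p = -log p := by
  simp [klBin]

lemma tendsto_chernoffFactor_one (p : ℝ) : Tendsto (chernoffFactor p 1) atTop (𝓝 p) := by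
  have h : chernoffFactor p 1 = fun t => (1 - p) * exp (-t) + p := by
    ext t
    simp only [chernoffFactor, mul_one, exp_neg]
    field_simp
    ring
  simpa [h] using (tendsto_exp_neg_atTop_nhds_zero.const_mul (1 - p)).add_const p

lemma chernoffFactor_log_odds_ratio {p a : ℝ} (hp0 : 0 < p) (hp1 : p < 1) (ha0 : 0 < a)
    (ha1 : a < 1) :
    chernoffFactor p a (log (a / p) - log ((1 - a) / (1 - p))) = exp (-klBin a p) := by
  have h1a : 0 < 1 - a := by linarith
  have h1p : 0 < 1 - p := by linarith
  have hmgf : 1 + p * (exp (log (a / p) - log ((1 - a) / (1 - p))) - 1) = (1 - p) / (1 - a) := by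
    rw [exp_sub, exp_log (by positivity), exp_log (by positivity)]
    field_simp
    ring
  rw [chernoffFactor, hmgf, ← exp_log (show 0 < (1 - p) / (1 - a) by positivity), ← exp_add,
    klBin, log_div ha0.ne' hp0.ne', log_div h1a.ne' h1p.ne', log_div h1p.ne' h1a.ne']
  ring_nf

lemma le_exp_neg_mul_klBin_of_forall_le {p a c : ℝ} (hp0 : 0 < p) (hp1 : p < 1) (hpa : p ≤ a)
    (ha1 : a ≤ 1) (n : ℕ) (hc : ∀ t, 0 ≤ t → c ≤ chernoffFactor p a t ^ n) :
    c ≤ exp (-n * klBin a p) := by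
  rw [neg_mul_comm, exp_nat_mul]
  rcases ha1.lt_or_eq with ha1 | rfl
  · have ha0 : 0 < a := hp0.trans_le hpa
    rw [← chernoffFactor_log_odds_ratio hp0 hp1 ha0 ha1]
    refine hc _ (sub_nonneg.mpr ((log_nonpos ?_ ?_).trans (log_nonneg ?_)))
    · exact div_nonneg (by linarith) (by linarith)
    · exact (div_le_one (by linarith)).mpr (by linarith)
    · exact (one_le_div hp0).mpr hpa
  · rw [klBin_one_left, neg_neg, exp_log hp0]
    exact ge_of_tendsto ((tendsto_chernoffFactor_one p).pow n) (eventually_atTop.mpr ⟨0, hc⟩)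

section

variable {Ω : Type*} {m m0 : MeasurableSpace Ω} {μ : Measure Ω}

lemma integrable_exp_mul_sum [IsFiniteMeasure μ] (I : ℕ → Ω → ℝ) (t : ℝ) (s : Finset ℕ)
    (hbin : ∀ i ∈ s, ∀ ω, I i ω = 0 ∨ I i ω = 1) (hmeas : ∀ i ∈ s, Measurable (I i)) :
    Integrable (fun ω => exp (t * ∑ i ∈ s, I i ω)) μ := by
  refine .of_bound (measurable_const.mul (Finset.measurable_sum s hmeas)).exp.aestronglyMeasurable
    (exp (|t| * #s)) (.of_forall fun ω => ?_)
  have hsum : |∑ i ∈ s, I i ω| ≤ #s := by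
    refine (abs_sum_le_sum_abs _ _).trans ?_
    calc ∑ i ∈ s, |I i ω| ≤ ∑ _i ∈ s, (1 : ℝ) :=
          sum_le_sum fun i hi => by rcases hbin i hi ω with h | h <;> simp [h]
      _ = #s := by simp
  rw [norm_of_nonneg (exp_pos _).le, exp_le_exp]
  calc t * ∑ i ∈ s, I i ω ≤ |t| * |∑ i ∈ s, I i ω| := (le_abs_self _).trans (abs_mul _ _).le
    _ ≤ |t| * #s := by gcongr

lemma integral_mul_le_of_condExp_le [IsFiniteMeasure μ] (hm : m ≤ m0) {g X : Ω → ℝ} {p : ℝ}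
    (hg : StronglyMeasurable[m] g) (hg0 : ∀ ω, 0 ≤ g ω) (hgi : Integrable g μ)
    (hX : Integrable X μ) (hgX : Integrable (g * X) μ) (hcond : ∀ᵐ ω ∂μ, μ[X|m] ω ≤ p) :
    ∫ ω, g ω * X ω ∂μ ≤ p * ∫ ω, g ω ∂μ := by
  have hpull := condExp_mul_of_stronglyMeasurable_left hg hgX hX
  calc ∫ ω, g ω * X ω ∂μ = ∫ ω, g ω * μ[X|m] ω ∂μ :=
        (integral_condExp hm).symm.trans (integral_congr_ae hpull)
    _ ≤ ∫ ω, g ω * p ∂μ := by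
        refine integral_mono_ae (integrable_condExp.congr hpull) (hgi.mul_const p) ?_
        filter_upwards [hcond] with ω hω using mul_le_mul_of_nonneg_left hω (hg0 ω)
    _ = p * ∫ ω, g ω ∂μ := by rw [integral_mul_const, mul_comm]

lemma integral_mul_exp_mul_le [IsFiniteMeasure μ] (hm : m ≤ m0) {g X : Ω → ℝ} {p t : ℝ}
    (hg : StronglyMeasurable[m] g) (hg0 : ∀ ω, 0 ≤ g ω) (hgi : Integrable g μ)
    (hX : Measurable X) (hbin : ∀ ω, X ω = 0 ∨ X ω = 1) (hcond : ∀ᵐ ω ∂μ, μ[X|m] ω ≤ p)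
    (ht : 0 ≤ t) :
    ∫ ω, g ω * exp (t * X ω) ∂μ ≤ (1 + p * (exp t - 1)) * ∫ ω, g ω ∂μ := by
  have habs : ∀ ω, ‖X ω‖ ≤ 1 := fun ω => by rcases hbin ω with h | h <;> simp [h]
  have hXi : Integrable X μ := .of_bound hX.aestronglyMeasurable 1 (.of_forall habs)
  have hgX : Integrable (fun ω => g ω * X ω) μ :=
    hgi.mul_bdd hX.aestronglyMeasurable (.of_forall habs)
  have hlin : ∀ ω, g ω * exp (t * X ω) = g ω + (exp t - 1) * (g ω * X ω) := fun ω => by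
    rcases hbin ω with h | h <;> simp only [h, mul_zero, mul_one, exp_zero] <;> ring
  simp_rw [hlin]
  rw [integral_add hgi (hgX.const_mul _), integral_const_mul]
  have het : 0 ≤ exp t - 1 := sub_nonneg.mpr (one_le_exp ht)
  calc ∫ ω, g ω ∂μ + (exp t - 1) * ∫ ω, g ω * X ω ∂μ
      ≤ ∫ ω, g ω ∂μ + (exp t - 1) * (p * ∫ ω, g ω ∂μ) := by
        gcongr
        exact integral_mul_le_of_condExp_le hm hg hg0 hgi hXi hgX hcond
    _ = (1 + p * (exp t - 1)) * ∫ ω, g ω ∂μ := by ring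

lemma integral_exp_mul_sum_le [IsProbabilityMeasure μ] (𝓕 : Filtration ℕ m0) (I : ℕ → Ω → ℝ)
    {p t : ℝ} (hp : 0 ≤ p) (ht : 0 ≤ t) (n : ℕ)
    (hbin : ∀ i ∈ Icc 1 n, ∀ ω, I i ω = 0 ∨ I i ω = 1)
    (hmeas : ∀ i ∈ Icc 1 n, Measurable[𝓕 i] (I i))
    (hcond : ∀ i ∈ Icc 1 n, ∀ᵐ ω ∂μ, μ[I i|𝓕 (i - 1)] ω ≤ p) :
    ∫ ω, exp (t * ∑ i ∈ Icc 1 n, I i ω) ∂μ ≤ (1 + p * (exp t - 1)) ^ n := by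
  induction n with
  | zero => simp
  | succ k ih =>
    have hsub : Icc 1 k ⊆ Icc 1 (k + 1) := Icc_subset_Icc_right k.le_succ
    have hlast : k + 1 ∈ Icc 1 (k + 1) := right_mem_Icc.mpr (by omega)
    have hadapted : StronglyMeasurable[𝓕 k] fun ω => exp (t * ∑ i ∈ Icc 1 k, I i ω) := by
      refine (measurable_const.mul (Finset.measurable_sum _ fun i hi => ?_)).exp.stronglyMeasurable
      exact (hmeas i (hsub hi)).mono (𝓕.mono (mem_Icc.mp hi).2) le_rfl
    have hstep := integral_mul_exp_mul_le (𝓕.le k) hadapted (fun ω => (exp_pos _).le)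
      (integrable_exp_mul_sum I t _ (fun i hi => hbin i (hsub hi))
        fun i hi => (hmeas i (hsub hi)).mono (𝓕.le i) le_rfl)
      ((hmeas _ hlast).mono (𝓕.le _) le_rfl) (hbin _ hlast) (by simpa using hcond _ hlast) ht
    have hmgf : 0 ≤ 1 + p * (exp t - 1) := by nlinarith [one_le_exp ht]
    simp_rw [sum_Icc_succ_top (by omega : 1 ≤ k + 1), mul_add, exp_add]
    calc _ ≤ _ := hstep
      _ ≤ (1 + p * (exp t - 1)) * (1 + p * (exp t - 1)) ^ k := by
        gcongr
        exact ih (fun i hi => hbin i (hsub hi)) (fun i hi => hmeas i (hsub hi))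
          fun i hi => hcond i (hsub hi)
      _ = (1 + p * (exp t - 1)) ^ (k + 1) := (pow_succ' _ _).symm

lemma measure_sum_ge_le [IsProbabilityMeasure μ] (𝓕 : Filtration ℕ m0) (I : ℕ → Ω → ℝ)
    {p t : ℝ} (hp : 0 ≤ p) (ht : 0 ≤ t) (n : ℕ)
    (hbin : ∀ i ∈ Icc 1 n, ∀ ω, I i ω = 0 ∨ I i ω = 1)
    (hmeas : ∀ i ∈ Icc 1 n, Measurable[𝓕 i] (I i))
    (hcond : ∀ i ∈ Icc 1 n, ∀ᵐ ω ∂μ, μ[I i|𝓕 (i - 1)] ω ≤ p) (c : ℝ) :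
    μ.real {ω | c ≤ ∑ i ∈ Icc 1 n, I i ω} ≤ exp (-t * c) * (1 + p * (exp t - 1)) ^ n := by
  refine (measure_ge_le_exp_mul_mgf c ht (integrable_exp_mul_sum I t _ hbin
    fun i hi => (hmeas i hi).mono (𝓕.le i) le_rfl)).trans ?_
  gcongr
  exact integral_exp_mul_sum_le 𝓕 I hp ht n hbin hmeas hcond

end

/-- **Soundness given per-round cheating bounds.**  With acceptance threshold
`τ = ⌈n·(p_max + ε′)⌉` for a per-round cheating bound `p_max ∈ (0,1)` and slack `ε′ > 0`
with `p_max + ε′ < 1`, one has `n·p_max < τ ≤ n` and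
`μ(S ≥ τ) ≤ exp(−n · D(τ/n ‖ p_max))`, where `S` is the number of accepted rounds of an
adversary whose conditional per-round success probability is at most `p_max`. -/
theorem soundness_given_per_round_bounds
    {Ω : Type*} {m0 : MeasurableSpace Ω} {μ : Measure Ω} [IsProbabilityMeasure μ]
    (n : ℕ) (hn : 1 ≤ n)
    (pmax ε' : ℝ) (hpmax : pmax ∈ Set.Ioo (0 : ℝ) 1) (hε' : 0 < ε')
    (hsum : pmax + ε' < 1)
    (𝓕 : Filtration ℕ m0) (I : ℕ → Ω → ℝ)
    (hbin : ∀ i ∈ Finset.Icc 1 n, ∀ ω, I i ω = 0 ∨ I i ω = 1)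
    (hmeas : ∀ i ∈ Finset.Icc 1 n, Measurable[𝓕 i] (I i))
    (hcond : ∀ i ∈ Finset.Icc 1 n, ∀ᵐ ω ∂μ, (μ[I i | 𝓕 (i - 1)]) ω ≤ pmax) :
    (n : ℝ) * pmax < (⌈(n : ℝ) * (pmax + ε')⌉₊ : ℝ) ∧
      ⌈(n : ℝ) * (pmax + ε')⌉₊ ≤ n ∧
      μ {ω | ((⌈(n : ℝ) * (pmax + ε')⌉₊ : ℕ) : ℝ) ≤ ∑ i ∈ Finset.Icc 1 n, I i ω}
        ≤ ENNReal.ofReal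
            (Real.exp (-(n : ℝ) * klBin ((⌈(n : ℝ) * (pmax + ε')⌉₊ : ℝ) / n) pmax)) := by
  obtain ⟨hp0, hp1⟩ := hpmax
  have hn0 : (0 : ℝ) < n := by exact_mod_cast hn
  set τ := ⌈(n : ℝ) * (pmax + ε')⌉₊
  have hτ_gt : n * pmax < τ := (by nlinarith : n * pmax < n * (pmax + ε')).trans_le (Nat.le_ceil _)
  have hτ_le : τ ≤ n := Nat.ceil_le.mpr (by nlinarith)
  refine ⟨hτ_gt, hτ_le, ?_⟩
  rw [← ENNReal.ofReal_toReal (measure_ne_top μ _)]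
  refine ENNReal.ofReal_le_ofReal (le_exp_neg_mul_klBin_of_forall_le hp0 hp1
    ((le_div_iff₀ hn0).mpr (by linarith)) ((div_le_one hn0).mpr (by exact_mod_cast hτ_le)) n
    fun t ht => ?_)
  calc μ.real _ ≤ exp (-t * τ) * (1 + pmax * (exp t - 1)) ^ n :=
        measure_sum_ge_le 𝓕 I hp0.le ht n hbin hmeas hcond τ
    _ = chernoffFactor pmax (τ / n) t ^ n := by
        rw [chernoffFactor, mul_pow, ← exp_nat_mul]
        congr 2
        field_simp
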